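/- Fix m > 0, E ∈ ℝ, and let Γ be the regularized four-degree-of-freedom rhomboidal Hamiltonian. At every point of the set 𝒜 = {Q₂ = Q₃ = P₂ = P₃ = 0} with Q₁ ≠ 0 or Q₄ ≠ 0, the partial derivatives ∂Γ/∂P₂, ∂Γ/∂P₃, ∂Γ/∂Q₂, ∂Γ/∂Q₃ all vanish; consequently the Hamiltonian vector field J∇Γ is tangent to 𝒜 (its components in the Q₂, Q₃, P₂, P₃ directions vanish on 𝒜), so 𝒜 is invariant under the regularized flow. -/

import Mathlib

open Matrix

noncomputable section

/-- The gradient of `f : (ι → ℝ) → ℝ` as the vector of partial derivatives. -/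
def grad {ι : Type*} [Fintype ι] [DecidableEq ι] (f : (ι → ℝ) → ℝ) (z : ι → ℝ) : ι → ℝ :=
  fun i => fderiv ℝ f z (Pi.single i 1)

/-- The standard `2n × 2n` symplectic matrix `[[0, I], [-I, 0]]`. -/
def Jmat (n : ℕ) : Matrix (Fin n ⊕ Fin n) (Fin n ⊕ Fin n) ℝ :=
  Matrix.fromBlocks 0 1 (-1) 0

/-- `ρ₁ = Q₁² + Q₂²`, in coordinates `(Q₁,Q₂,Q₃,Q₄,P₁,P₂,P₃,P₄)` with
`Qᵢ = z (Sum.inl (i-1))` and `Pᵢ = z (Sum.inr (i-1))`. -/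
def rho1 (z : (Fin 4 ⊕ Fin 4) → ℝ) : ℝ := (z (Sum.inl 0)) ^ 2 + (z (Sum.inl 1)) ^ 2

/-- `ρ₂ = Q₃² + Q₄²`. -/
def rho2 (z : (Fin 4 ⊕ Fin 4) → ℝ) : ℝ := (z (Sum.inl 2)) ^ 2 + (z (Sum.inl 3)) ^ 2

/-- `𝐐 = Q₁²Q₃Q₄ − Q₂²Q₃Q₄ − Q₁Q₂Q₃² + Q₁Q₂Q₄²`. -/
def QQ (z : (Fin 4 ⊕ Fin 4) → ℝ) : ℝ :=
  (z (Sum.inl 0)) ^ 2 * z (Sum.inl 2) * z (Sum.inl 3)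
    - (z (Sum.inl 1)) ^ 2 * z (Sum.inl 2) * z (Sum.inl 3)
    - z (Sum.inl 0) * z (Sum.inl 1) * (z (Sum.inl 2)) ^ 2
    + z (Sum.inl 0) * z (Sum.inl 1) * (z (Sum.inl 3)) ^ 2

/-- The regularized four-degree-of-freedom rhomboidal Hamiltonian in extended
phase space, with mass parameter `m` and energy parameter `E`. -/
def Gamma4 (m E : ℝ) (z : (Fin 4 ⊕ Fin 4) → ℝ) : ℝ :=
  (rho2 z / 16) * ((z (Sum.inr 0)) ^ 2 + (z (Sum.inr 1)) ^ 2)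
    + (rho1 z / (16 * m)) * ((z (Sum.inr 2)) ^ 2 + (z (Sum.inr 3)) ^ 2)
    - rho2 z / 2 - m ^ 2 * rho1 z / 2
    - 2 * m * rho1 z * rho2 z *
        (1 / Real.sqrt ((rho1 z) ^ 2 + (rho2 z) ^ 2 - 4 * QQ z)
          + 1 / Real.sqrt ((rho1 z) ^ 2 + (rho2 z) ^ 2 + 4 * QQ z))
    - E * rho1 z * rho2 z

/-! The reflection `(Q₂, Q₃, P₂, P₃) ↦ -(Q₂, Q₃, P₂, P₃)` fixes `𝒜` pointwise, preserves `ρ₁`, `ρ₂`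
and the kinetic terms, and changes the sign of `𝐐`, which merely swaps the two collision terms; so
`Γ` is invariant under it. Differentiating this invariance at a point of `𝒜` shows that `∇Γ` is
fixed by the reflection, i.e. its `Q₂, Q₃, P₂, P₃` components vanish, and `J` only permutes these
components (up to sign). -/

/-- No differentiability is needed: the chain rule through a linear equivalence,
`ContinuousLinearEquiv.comp_right_fderiv`, holds unconditionally for `fderiv`. -/
theorem fderiv_apply_eq_zero_of_invariant {E F : Type*} [NormedAddCommGroup E] [NormedSpace ℝ E]
    [NormedAddCommGroup F] [NormedSpace ℝ F] {f : E → F} (σ : E ≃L[ℝ] E) (hf : ∀ x, f (σ x) = f x)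
    {z v : E} (hz : σ z = z) (hv : σ v = -v) : fderiv ℝ f z v = 0 := by
  have hcomp : fderiv ℝ f z = (fderiv ℝ f z).comp (σ : E →L[ℝ] E) := by
    conv_lhs => rw [← funext hf, ← Function.comp_def, σ.comp_right_fderiv, hz]
  have hneg : fderiv ℝ f z v = -fderiv ℝ f z v := by
    conv_lhs => rw [hcomp, ContinuousLinearMap.comp_apply, ContinuousLinearEquiv.coe_coe, hv,
      map_neg]
  have htwice : (2 : ℝ) • fderiv ℝ f z v = 0 := by
    rw [two_smul]
    nth_rewrite 1 [hneg]
    exact neg_add_cancel _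
  exact (smul_eq_zero.mp htwice).resolve_left two_ne_zero

section Reflection

variable {ι : Type*} [DecidableEq ι]

def reflect (S : Finset ι) : (ι → ℝ) ≃L[ℝ] (ι → ℝ) :=
  ContinuousLinearEquiv.piCongrRight fun i =>
    if i ∈ S then ContinuousLinearEquiv.neg ℝ else ContinuousLinearEquiv.refl ℝ ℝ

theorem reflect_apply (S : Finset ι) (w : ι → ℝ) (i : ι) :
    reflect S w i = if i ∈ S then -w i else w i := by
  by_cases h : i ∈ S <;> simp [reflect, h]

theorem reflect_eq_self {S : Finset ι} {w : ι → ℝ} (hw : ∀ i ∈ S, w i = 0) : reflect S w = w := by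
  funext i
  by_cases h : i ∈ S <;> simp [reflect_apply, h, hw]

theorem reflect_single {S : Finset ι} {i : ι} (hi : i ∈ S) :
    reflect S (Pi.single i 1) = -Pi.single i 1 := by
  funext j
  by_cases h : j = i
  · subst h; simp [reflect_apply, hi]
  · simp [reflect_apply, Pi.single_eq_of_ne h]

end Reflection

theorem Jmat_mulVec_inl (n : ℕ) (g : Fin n ⊕ Fin n → ℝ) (i : Fin n) :
    (Jmat n).mulVec g (Sum.inl i) = g (Sum.inr i) := by
  simp [Jmat, fromBlocks_mulVec]

theorem Jmat_mulVec_inr (n : ℕ) (g : Fin n ⊕ Fin n → ℝ) (i : Fin n) :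
    (Jmat n).mulVec g (Sum.inr i) = -g (Sum.inl i) := by
  simp [Jmat, fromBlocks_mulVec, neg_mulVec]

/-- The coordinates `Q₂, Q₃, P₂, P₃` whose vanishing defines `𝒜`. -/
abbrev oddCoords : Finset (Fin 4 ⊕ Fin 4) := {Sum.inl 1, Sum.inl 2, Sum.inr 1, Sum.inr 2}

theorem rho1_reflect (w : Fin 4 ⊕ Fin 4 → ℝ) : rho1 (reflect oddCoords w) = rho1 w := by
  simp [rho1, reflect_apply]

theorem rho2_reflect (w : Fin 4 ⊕ Fin 4 → ℝ) : rho2 (reflect oddCoords w) = rho2 w := by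
  simp [rho2, reflect_apply]

theorem QQ_reflect (w : Fin 4 ⊕ Fin 4 → ℝ) : QQ (reflect oddCoords w) = -QQ w := by
  simp [QQ, reflect_apply]
  ring

theorem Gamma4_reflect (m E : ℝ) (w : Fin 4 ⊕ Fin 4 → ℝ) :
    Gamma4 m E (reflect oddCoords w) = Gamma4 m E w := by
  simp only [Gamma4, rho1_reflect, rho2_reflect, QQ_reflect, reflect_apply, mul_neg,
    sub_neg_eq_add, ← sub_eq_add_neg]
  simp only [oddCoords, Finset.mem_insert, Finset.mem_singleton, reduceCtorEq, Sum.inr.injEq,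
    Fin.reduceEq, false_or, or_false, if_true, if_false, neg_sq]
  ring

theorem A_invariant_general (m E : ℝ) (z : (Fin 4 ⊕ Fin 4) → ℝ)
    (hQ2 : z (Sum.inl 1) = 0) (hQ3 : z (Sum.inl 2) = 0)
    (hP2 : z (Sum.inr 1) = 0) (hP3 : z (Sum.inr 2) = 0) :
    (fderiv ℝ (Gamma4 m E) z (Pi.single (Sum.inr 1) 1) = 0 ∧
     fderiv ℝ (Gamma4 m E) z (Pi.single (Sum.inr 2) 1) = 0 ∧
     fderiv ℝ (Gamma4 m E) z (Pi.single (Sum.inl 1) 1) = 0 ∧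
     fderiv ℝ (Gamma4 m E) z (Pi.single (Sum.inl 2) 1) = 0) ∧
    ((Jmat 4).mulVec (grad (Gamma4 m E) z) (Sum.inl 1) = 0 ∧
     (Jmat 4).mulVec (grad (Gamma4 m E) z) (Sum.inl 2) = 0 ∧
     (Jmat 4).mulVec (grad (Gamma4 m E) z) (Sum.inr 1) = 0 ∧
     (Jmat 4).mulVec (grad (Gamma4 m E) z) (Sum.inr 2) = 0) := by
  have hz : reflect oddCoords z = z := reflect_eq_self (by simp [hQ2, hQ3, hP2, hP3])
  have partial_eq_zero : ∀ i ∈ oddCoords, fderiv ℝ (Gamma4 m E) z (Pi.single i 1) = 0 :=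
    fun i hi => fderiv_apply_eq_zero_of_invariant (reflect oddCoords)
      (Gamma4_reflect m E) hz (reflect_single hi)
  have dP2 := partial_eq_zero (Sum.inr 1) (by simp)
  have dP3 := partial_eq_zero (Sum.inr 2) (by simp)
  have dQ2 := partial_eq_zero (Sum.inl 1) (by simp)
  have dQ3 := partial_eq_zero (Sum.inl 2) (by simp)
  refine ⟨⟨dP2, dP3, dQ2, dQ3⟩, ?_, ?_, ?_, ?_⟩ <;>
    simp [Jmat_mulVec_inl, Jmat_mulVec_inr, grad, dP2, dP3, dQ2, dQ3]

/-- On the set `𝒜 = {Q₂ = Q₃ = P₂ = P₃ = 0}` (with `Q₁ ≠ 0` or `Q₄ ≠ 0`), the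
partial derivatives `∂Γ/∂P₂`, `∂Γ/∂P₃`, `∂Γ/∂Q₂`, `∂Γ/∂Q₃` vanish, hence the
components of the Hamiltonian vector field `J∇Γ` in the `Q₂, Q₃, P₂, P₃`
directions vanish on `𝒜`, so `𝒜` is invariant under the regularized flow. -/
theorem A_invariant (m E : ℝ) (hm : 0 < m) (z : (Fin 4 ⊕ Fin 4) → ℝ)
    (hQ2 : z (Sum.inl 1) = 0) (hQ3 : z (Sum.inl 2) = 0)
    (hP2 : z (Sum.inr 1) = 0) (hP3 : z (Sum.inr 2) = 0)
    (hz : z (Sum.inl 0) ≠ 0 ∨ z (Sum.inl 3) ≠ 0) :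
    (fderiv ℝ (Gamma4 m E) z (Pi.single (Sum.inr 1) 1) = 0 ∧
     fderiv ℝ (Gamma4 m E) z (Pi.single (Sum.inr 2) 1) = 0 ∧
     fderiv ℝ (Gamma4 m E) z (Pi.single (Sum.inl 1) 1) = 0 ∧
     fderiv ℝ (Gamma4 m E) z (Pi.single (Sum.inl 2) 1) = 0) ∧
    ((Jmat 4).mulVec (grad (Gamma4 m E) z) (Sum.inl 1) = 0 ∧
     (Jmat 4).mulVec (grad (Gamma4 m E) z) (Sum.inl 2) = 0 ∧
     (Jmat 4).mulVec (grad (Gamma4 m E) z) (Sum.inr 1) = 0 ∧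
     (Jmat 4).mulVec (grad (Gamma4 m E) z) (Sum.inr 2) = 0) :=
  A_invariant_general m E z hQ2 hQ3 hP2 hP3
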